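/- arXiv:1507.06193 — 2 statements merged into one kernel-verified Lean document; each statement's English description precedes it below -/
import Mathlib

section
/- Let d ≥ 1 and n ≥ 1. Let X_{Q,S}, X_{P,S} : ℝ^d × ℝ^d → ℝ^{d×n} be continuously differentiable matrix-valued maps. Then the following are equivalent: (a) for all (q,p), all i,k ∈ {1,…,d} and all j ∈ {1,…,n}: ∂(X_{Q,S})_{ij}/∂q_k + ∂(X_{P,S})_{kj}/∂p_i = 0, ∂(X_{Q,S})_{ij}/∂p_k = ∂(X_{Q,S})_{kj}/∂p_i, and ∂(X_{P,S})_{ij}/∂q_k = ∂(X_{P,S})_{kj}/∂q_i; (b) there exists a twice continuously differentiable map H_S : ℝ^d × ℝ^d → ℝ^n such that for all i,j: (X_{Q,S})_{ij} = ∂(H_S)_j/∂p_i and (X_{P,S})_{ij} = −∂(H_S)_j/∂q_i. Moreover, in the affirmative case one may take (H_S)_j(q,p) = ∫₀¹ ( Σ_i p_i (X_{Q,S})_{ij}(λq, λp) − Σ_i q_i (X_{P,S})_{ij}(λq, λp) ) dλ. -/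
/-!
Column `j` of `(X_{Q,S}, X_{P,S})` is the 1-form `ωⱼ = ∑ᵢ (X_{Q,S})ᵢⱼ dpᵢ - (X_{P,S})ᵢⱼ dqᵢ`
on `ℝ^{2d}`, and the integrability conditions say exactly that `Dωⱼ(z)` is a symmetric bilinear
form, i.e. that `ωⱼ` is closed. By the Poincaré lemma on the star-shaped space `ℝ^{2d}`,
`x ↦ ∫₀¹ ωⱼ(t x) x dt` is then a primitive of `ωⱼ`: differentiating under the integral sign and
using the symmetry, the derivative of the integrand is `d/dt (t ωⱼ(t x))`. This primitive is the
candidate `(H_S)ⱼ`. Conversely, if `ωⱼ = d(H_S)ⱼ` with `H_S` of class `C²`, the conditions are the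
symmetry of the second derivative of `(H_S)ⱼ`.
-/

noncomputable section

/-- Partial derivative of a scalar function on `ℝ^d × ℝ^d` with respect to `q_k`. -/
def pdq (d : ℕ) (f : ((Fin d → ℝ) × (Fin d → ℝ)) → ℝ) (k : Fin d)
    (z : (Fin d → ℝ) × (Fin d → ℝ)) : ℝ :=
  fderiv ℝ f z ((Pi.single k 1 : Fin d → ℝ), 0)

/-- Partial derivative of a scalar function on `ℝ^d × ℝ^d` with respect to `p_k`. -/
def pdp (d : ℕ) (f : ((Fin d → ℝ) × (Fin d → ℝ)) → ℝ) (k : Fin d)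
    (z : (Fin d → ℝ) × (Fin d → ℝ)) : ℝ :=
  fderiv ℝ f z (0, (Pi.single k 1 : Fin d → ℝ))

/-- The stochastic integrability conditions for the purely stochastic part, for
matrix-valued maps `X_{Q,S}, X_{P,S} : ℝ^d × ℝ^d → ℝ^{d×n}`. -/
def StochIntegrability (d n : ℕ)
    (XQS XPS : ((Fin d → ℝ) × (Fin d → ℝ)) → Fin d → Fin n → ℝ) : Prop :=
  ∀ z : (Fin d → ℝ) × (Fin d → ℝ), ∀ i k : Fin d, ∀ j : Fin n,
    pdq d (fun w => XQS w i j) k z + pdp d (fun w => XPS w k j) i z = 0 ∧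
    pdp d (fun w => XQS w i j) k z = pdp d (fun w => XQS w k j) i z ∧
    pdq d (fun w => XPS w i j) k z = pdq d (fun w => XPS w k j) i z

/-- The candidate stochastic Hamiltonian
`(H_S)_j(q,p) = ∫₀¹ (Σ_i p_i (X_{Q,S})_{ij}(λq,λp) − Σ_i q_i (X_{P,S})_{ij}(λq,λp)) dλ`. -/
def candidateHS (d n : ℕ)
    (XQS XPS : ((Fin d → ℝ) × (Fin d → ℝ)) → Fin d → Fin n → ℝ)
    (z : (Fin d → ℝ) × (Fin d → ℝ)) : Fin n → ℝ := fun j =>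
  ∫ l in (0:ℝ)..1,
    ((∑ i, z.2 i * XQS (l • z.1, l • z.2) i j) - ∑ i, z.1 i * XPS (l • z.1, l • z.2) i j)

open intervalIntegral Metric Set

section Leibniz

variable {H G : Type*} [NormedAddCommGroup H] [NormedSpace ℝ H] [ProperSpace H]
  [NormedAddCommGroup G] [NormedSpace ℝ G]

theorem hasFDerivAt_intervalIntegral_of_continuous {f : H → ℝ → G} {f' : H → ℝ → H →L[ℝ] G}
    (hf : Continuous (Function.uncurry f)) (hf' : Continuous (Function.uncurry f'))
    (hderiv : ∀ x t, HasFDerivAt (fun y => f y t) (f' x t) x) (a b : ℝ) (x₀ : H) :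
    HasFDerivAt (fun x => ∫ t in a..b, f x t) (∫ t in a..b, f' x₀ t) x₀ := by
  obtain ⟨C, hC⟩ := ((isCompact_closedBall x₀ 1).prod isCompact_uIcc).exists_bound_of_continuousOn
    hf'.continuousOn
  have hf_t : ∀ x, Continuous (f x) := fun x => hf.comp (Continuous.prodMk_right x)
  refine hasFDerivAt_integral_of_dominated_of_fderiv_le (bound := fun _ => C)
    (Metric.ball_mem_nhds x₀ one_pos) (.of_forall fun x => (hf_t x).aestronglyMeasurable)
    ((hf_t x₀).intervalIntegrable a b)
    (hf'.comp (Continuous.prodMk_right x₀)).aestronglyMeasurable ?_ intervalIntegrable_const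
    (.of_forall fun t _ x _ => hderiv x t)
  exact .of_forall fun t ht x hx => hC (x, t) ⟨ball_subset_closedBall hx, uIoc_subset_uIcc ht⟩

end Leibniz

section Poincare

variable {E G : Type*} [NormedAddCommGroup E] [NormedSpace ℝ E]
  [NormedAddCommGroup G] [NormedSpace ℝ G]

def radialPotential (ω : E → E →L[ℝ] G) (x : E) : G :=
  ∫ t in (0 : ℝ)..1, ω (t • x) x

theorem hasFDerivAt_radialIntegrand {ω : E → E →L[ℝ] G} (hω : Differentiable ℝ ω)
    (hsymm : ∀ z v w, fderiv ℝ ω z v w = fderiv ℝ ω z w v) (t : ℝ) (x : E) :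
    HasFDerivAt (fun y => ω (t • y) y) (ω (t • x) + t • fderiv ℝ ω (t • x) x) x := by
  have h := ((hω (t • x)).hasFDerivAt.comp x ((hasFDerivAt_id x).const_smul t)).clm_apply
    (hasFDerivAt_id x)
  refine h.congr_fderiv ?_
  ext v
  simp [hsymm (t • x) x v]

variable [ProperSpace E] [CompleteSpace G]

theorem hasFDerivAt_radialPotential {ω : E → E →L[ℝ] G} (hω : ContDiff ℝ 1 ω)
    (hsymm : ∀ z v w, fderiv ℝ ω z v w = fderiv ℝ ω z w v) (x₀ : E) :
    HasFDerivAt (radialPotential ω) (ω x₀) x₀ := by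
  have hd := hω.differentiable one_ne_zero
  have hc := hω.continuous
  have hc' := hω.continuous_fderiv one_ne_zero
  have hleibniz := hasFDerivAt_intervalIntegral_of_continuous
    (f := fun x t => ω (t • x) x) (f' := fun x t => ω (t • x) + t • fderiv ℝ ω (t • x) x)
    (by fun_prop) (by fun_prop) (fun x t => hasFDerivAt_radialIntegrand hd hsymm t x) 0 1 x₀
  have hprim : ∀ t : ℝ, HasDerivAt (fun s : ℝ => s • ω (s • x₀))
      (ω (t • x₀) + t • fderiv ℝ ω (t • x₀) x₀) t := by
    intro t
    have h : HasDerivAt (fun s : ℝ => s • ω (s • x₀))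
        (t • fderiv ℝ ω (t • x₀) ((1 : ℝ) • x₀) + (1 : ℝ) • ω (t • x₀)) t :=
      (hasDerivAt_id' t).smul
        ((hd (t • x₀)).hasFDerivAt.comp_hasDerivAt t ((hasDerivAt_id' t).smul_const x₀))
    rwa [one_smul, one_smul, add_comm] at h
  have hcont : Continuous fun t : ℝ => ω (t • x₀) + t • fderiv ℝ ω (t • x₀) x₀ := by fun_prop
  rwa [integral_eq_sub_of_hasDerivAt (fun t _ => hprim t) (hcont.intervalIntegrable 0 1),
    one_smul, one_smul, zero_smul, sub_zero] at hleibniz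

end Poincare

theorem sum_sum_mul_mul_swap {ι R : Type*} [Fintype ι] [CommSemiring R] (x y : ι → R)
    {a b : ι → ι → R} (hab : ∀ i k, a i k = b k i) :
    ∑ i, ∑ k, x i * (y k * a i k) = ∑ i, ∑ k, y i * (x k * b i k) := by
  rw [Finset.sum_comm]
  exact Finset.sum_congr rfl fun i _ => Finset.sum_congr rfl fun k _ => by rw [hab]; ring

section SecondDerivative

variable {E F : Type*} [NormedAddCommGroup E] [NormedSpace ℝ E]
  [NormedAddCommGroup F] [NormedSpace ℝ F]

theorem fderiv_fderiv_apply_comm {f : E → F} (hf : ContDiff ℝ 2 f) (z u v : E) :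
    fderiv ℝ (fun w => fderiv ℝ f w u) z v = fderiv ℝ (fun w => fderiv ℝ f w v) z u := by
  have hf' : DifferentiableAt ℝ (fderiv ℝ f) z :=
    (hf.fderiv_right (m := 1) le_rfl).differentiable one_ne_zero z
  rw [fderiv_clm_apply hf' (differentiableAt_const u),
    fderiv_clm_apply hf' (differentiableAt_const v)]
  simpa using (hf.contDiffAt.isSymmSndFDerivAt (by simp)).eq v u

end SecondDerivative

abbrev PhaseSpace (d : ℕ) := (Fin d → ℝ) × (Fin d → ℝ)

variable {d n : ℕ}

theorem fderiv_apply_eq_sum_pdq_add_sum_pdp {f : PhaseSpace d → ℝ} {z : PhaseSpace d}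
    (v : PhaseSpace d) :
    fderiv ℝ f z v = ∑ k, v.1 k * pdq d f k z + ∑ k, v.2 k * pdp d f k z := by
  have hv : v = ∑ k, v.1 k • ((Pi.single k 1, 0) : PhaseSpace d) +
      ∑ k, v.2 k • ((0, Pi.single k 1) : PhaseSpace d) := by
    ext i <;> simp [Prod.fst_sum, Prod.snd_sum, Finset.sum_apply, Pi.single_apply]
  conv_lhs => rw [hv]
  simp only [map_add, map_sum, map_smul, smul_eq_mul, pdq, pdp]

section ColumnForm

variable (XQS XPS : PhaseSpace d → Fin d → Fin n → ℝ) (j : Fin n)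

/-- The 1-form `∑ᵢ (X_{Q,S})ᵢⱼ dpᵢ - (X_{P,S})ᵢⱼ dqᵢ`, of which `(H_S)ⱼ` is a primitive. -/
def columnForm (z : PhaseSpace d) : PhaseSpace d →L[ℝ] ℝ :=
  ∑ i, XQS z i j • (ContinuousLinearMap.proj i).comp (ContinuousLinearMap.snd ℝ _ _) -
    ∑ i, XPS z i j • (ContinuousLinearMap.proj i).comp (ContinuousLinearMap.fst ℝ _ _)

theorem columnForm_apply (z v : PhaseSpace d) :
    columnForm XQS XPS j z v = ∑ i, XQS z i j * v.2 i - ∑ i, XPS z i j * v.1 i := by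
  simp [columnForm]

theorem columnForm_apply_single_snd (z : PhaseSpace d) (i : Fin d) :
    columnForm XQS XPS j z (0, Pi.single i 1) = XQS z i j := by
  simp [columnForm_apply, Pi.single_apply]

theorem columnForm_apply_single_fst (z : PhaseSpace d) (i : Fin d) :
    columnForm XQS XPS j z (Pi.single i 1, 0) = -XPS z i j := by
  simp [columnForm_apply, Pi.single_apply]

theorem candidateHS_eq_radialPotential :
    (fun z => candidateHS d n XQS XPS z j) = radialPotential (columnForm XQS XPS j) := by
  funext z
  refine integral_congr fun l _ => ?_
  simp only [columnForm_apply, mul_comm]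
  rfl

variable {XQS XPS}

theorem contDiff_columnForm (hXQS : ContDiff ℝ 1 XQS) (hXPS : ContDiff ℝ 1 XPS) :
    ContDiff ℝ 1 (columnForm XQS XPS j) := by
  have hQ : ∀ i, ContDiff ℝ 1 fun z => XQS z i j := fun i => by fun_prop
  have hP : ∀ i, ContDiff ℝ 1 fun z => XPS z i j := fun i => by fun_prop
  unfold columnForm
  fun_prop

theorem fderiv_columnForm_apply (hXQS : ContDiff ℝ 1 XQS) (hXPS : ContDiff ℝ 1 XPS)
    (z v w : PhaseSpace d) :
    fderiv ℝ (columnForm XQS XPS j) z v w =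
      ∑ i, w.2 i * fderiv ℝ (fun y => XQS y i j) z v -
        ∑ i, w.1 i * fderiv ℝ (fun y => XPS y i j) z v := by
  have hQ : ∀ i, DifferentiableAt ℝ (fun y => XQS y i j) z := fun i =>
    (show ContDiff ℝ 1 fun y => XQS y i j by fun_prop).differentiable one_ne_zero z
  have hP : ∀ i, DifferentiableAt ℝ (fun y => XPS y i j) z := fun i =>
    (show ContDiff ℝ 1 fun y => XPS y i j by fun_prop).differentiable one_ne_zero z
  have h : HasFDerivAt (columnForm XQS XPS j) _ z :=
    (HasFDerivAt.fun_sum (u := Finset.univ) fun i _ =>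
        (hQ i).hasFDerivAt.smul_const ((ContinuousLinearMap.proj i).comp (.snd ℝ _ _))).fun_sub
      (HasFDerivAt.fun_sum (u := Finset.univ) fun i _ =>
        (hP i).hasFDerivAt.smul_const
          ((ContinuousLinearMap.proj i).comp (.fst ℝ (Fin d → ℝ) (Fin d → ℝ))))
  rw [h.fderiv]
  simp [mul_comm]

theorem fderiv_columnForm_symm (hXQS : ContDiff ℝ 1 XQS) (hXPS : ContDiff ℝ 1 XPS)
    (hint : StochIntegrability d n XQS XPS) (z v w : PhaseSpace d) :
    fderiv ℝ (columnForm XQS XPS j) z v w = fderiv ℝ (columnForm XQS XPS j) z w v := by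
  simp only [fderiv_columnForm_apply j hXQS hXPS, fderiv_apply_eq_sum_pdq_add_sum_pdp, mul_add,
    Finset.mul_sum, Finset.sum_add_distrib]
  have hQq := sum_sum_mul_mul_swap w.2 v.1
    (fun x i => eq_neg_of_add_eq_zero_left (hint z x i j).1)
  have hQq' := sum_sum_mul_mul_swap v.2 w.1
    (fun x i => eq_neg_of_add_eq_zero_left (hint z x i j).1)
  have hQp := sum_sum_mul_mul_swap w.2 v.2 (fun x i => (hint z x i j).2.1)
  have hPq := sum_sum_mul_mul_swap w.1 v.1 (fun x i => (hint z x i j).2.2)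
  simp only [mul_neg, Finset.sum_neg_distrib] at hQq hQq'
  linear_combination hQq + hQp - hPq - hQq'

end ColumnForm

section Potential

variable {XQS XPS : PhaseSpace d → Fin d → Fin n → ℝ}

theorem hasFDerivAt_candidateHS (hXQS : ContDiff ℝ 1 XQS) (hXPS : ContDiff ℝ 1 XPS)
    (hint : StochIntegrability d n XQS XPS) (j : Fin n) (z : PhaseSpace d) :
    HasFDerivAt (fun w => candidateHS d n XQS XPS w j) (columnForm XQS XPS j z) z := by
  rw [candidateHS_eq_radialPotential]
  exact hasFDerivAt_radialPotential (contDiff_columnForm j hXQS hXPS)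
    (fderiv_columnForm_symm j hXQS hXPS hint) z

theorem contDiff_candidateHS (hXQS : ContDiff ℝ 1 XQS) (hXPS : ContDiff ℝ 1 XPS)
    (hint : StochIntegrability d n XQS XPS) : ContDiff ℝ 2 (candidateHS d n XQS XPS) :=
  contDiff_pi.mpr fun j => contDiff_succ_iff_hasFDerivAt (n := 1).mpr
    ⟨_, contDiff_columnForm j hXQS hXPS, hasFDerivAt_candidateHS hXQS hXPS hint j⟩

theorem candidateHS_isPotential (hXQS : ContDiff ℝ 1 XQS) (hXPS : ContDiff ℝ 1 XPS)
    (hint : StochIntegrability d n XQS XPS) (z : PhaseSpace d) (i : Fin d) (j : Fin n) :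
    XQS z i j = pdp d (fun w => candidateHS d n XQS XPS w j) i z ∧
      XPS z i j = -pdq d (fun w => candidateHS d n XQS XPS w j) i z := by
  simp only [pdp, pdq, (hasFDerivAt_candidateHS hXQS hXPS hint j z).fderiv,
    columnForm_apply_single_snd, columnForm_apply_single_fst, neg_neg, and_self]

theorem stochIntegrability_of_isPotential {HS : PhaseSpace d → Fin n → ℝ}
    (hHS : ContDiff ℝ 2 HS)
    (hpot : ∀ (z : PhaseSpace d) (i : Fin d) (j : Fin n),
      XQS z i j = pdp d (fun w => HS w j) i z ∧ XPS z i j = -pdq d (fun w => HS w j) i z) :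
    StochIntegrability d n XQS XPS := by
  intro z i k j
  have hcomm := fderiv_fderiv_apply_comm (contDiff_pi.mp hHS j) z
  have hQ : ∀ i, (fun w => XQS w i j) =
      fun w => fderiv ℝ (fun w => HS w j) w (0, Pi.single i 1) :=
    fun i => funext fun w => (hpot w i j).1
  have hP : ∀ i, (fun w => XPS w i j) =
      fun w => -fderiv ℝ (fun w => HS w j) w (Pi.single i 1, 0) :=
    fun i => funext fun w => (hpot w i j).2
  simp only [pdq, pdp, hQ, hP, fderiv_fun_neg, neg_apply]
  refine ⟨?_, hcomm _ _, by rw [hcomm]⟩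
  rw [hcomm]
  ring

end Potential

theorem stmt4_general (d n : ℕ)
    (XQS XPS : ((Fin d → ℝ) × (Fin d → ℝ)) → Fin d → Fin n → ℝ)
    (hXQS : ContDiff ℝ 1 XQS) (hXPS : ContDiff ℝ 1 XPS) :
    (StochIntegrability d n XQS XPS ↔
      ∃ HS : ((Fin d → ℝ) × (Fin d → ℝ)) → Fin n → ℝ, ContDiff ℝ 2 HS ∧
        ∀ (z : (Fin d → ℝ) × (Fin d → ℝ)) (i : Fin d) (j : Fin n),
          XQS z i j = pdp d (fun w => HS w j) i z ∧
          XPS z i j = - pdq d (fun w => HS w j) i z) ∧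
    (StochIntegrability d n XQS XPS →
      (ContDiff ℝ 2 (candidateHS d n XQS XPS) ∧
        ∀ (z : (Fin d → ℝ) × (Fin d → ℝ)) (i : Fin d) (j : Fin n),
          XQS z i j = pdp d (fun w => candidateHS d n XQS XPS w j) i z ∧
          XPS z i j = - pdq d (fun w => candidateHS d n XQS XPS w j) i z)) := by
  have hcandidate : StochIntegrability d n XQS XPS → ContDiff ℝ 2 (candidateHS d n XQS XPS) ∧
      ∀ z i j, XQS z i j = pdp d (fun w => candidateHS d n XQS XPS w j) i z ∧
        XPS z i j = -pdq d (fun w => candidateHS d n XQS XPS w j) i z := fun hint =>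
    ⟨contDiff_candidateHS hXQS hXPS hint, candidateHS_isPotential hXQS hXPS hint⟩
  refine ⟨⟨fun hint => ⟨_, hcandidate hint⟩, ?_⟩, hcandidate⟩
  rintro ⟨HS, hHS, hpot⟩
  exact stochIntegrability_of_isPotential hHS hpot

/-- the stochastic integrability conditions for the purely
stochastic part hold iff the diffusion coefficients derive from a C² potential
`H_S : ℝ^d × ℝ^d → ℝ^n`; in the affirmative case one may take the explicit
candidate. -/
theorem stmt4 (d n : ℕ) (hd : 1 ≤ d) (hn : 1 ≤ n)
    (XQS XPS : ((Fin d → ℝ) × (Fin d → ℝ)) → Fin d → Fin n → ℝ)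
    (hXQS : ContDiff ℝ 1 XQS) (hXPS : ContDiff ℝ 1 XPS) :
    (StochIntegrability d n XQS XPS ↔
      ∃ HS : ((Fin d → ℝ) × (Fin d → ℝ)) → Fin n → ℝ, ContDiff ℝ 2 HS ∧
        ∀ (z : (Fin d → ℝ) × (Fin d → ℝ)) (i : Fin d) (j : Fin n),
          XQS z i j = pdp d (fun w => HS w j) i z ∧
          XPS z i j = - pdq d (fun w => HS w j) i z) ∧
    (StochIntegrability d n XQS XPS →
      (ContDiff ℝ 2 (candidateHS d n XQS XPS) ∧
        ∀ (z : (Fin d → ℝ) × (Fin d → ℝ)) (i : Fin d) (j : Fin n),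
          XQS z i j = pdp d (fun w => candidateHS d n XQS XPS w j) i z ∧
          XPS z i j = - pdq d (fun w => candidateHS d n XQS XPS w j) i z)) :=
  stmt4_general d n XQS XPS hXQS hXPS
end
end

section
/- Let d ≥ 1, a < b, and let X = (X_Q, X_P) : ℝ^d × ℝ^d → ℝ^d × ℝ^d be a continuously differentiable vector field satisfying the Hamiltonian integrability conditions. Let q, p : [a,b] → ℝ^d be continuous, and for C¹ curves u, v : [a,b] → ℝ^d define the linearized operator D(u,v)(t) = ( u̇(t) − A(t)u(t) − B(t)v(t), v̇(t) − C(t)u(t) − E(t)v(t) ), where A(t) = ∂X_Q/∂q (q(t),p(t)), B(t) = ∂X_Q/∂p (q(t),p(t)), C(t) = ∂X_P/∂q (q(t),p(t)), E(t) = ∂X_P/∂p (q(t),p(t)). Then for all C¹ curves u, v, f, g : [a,b] → ℝ^d with u(a)=u(b)=v(a)=v(b)=f(a)=f(b)=g(a)=g(b)=0, one has ∫_a^b ⟨ D(u,v)(t), J·(f(t),g(t)) ⟩ dt = ∫_a^b ⟨ D(f,g)(t), J·(u(t),v(t)) ⟩ dt, where J is the 2d×2d symplectic matrix [[0, I_d],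 [−I_d, 0]] and ⟨·,·⟩ is the Euclidean inner product on ℝ^{2d}. -/
noncomputable section

/-- The Hamiltonian integrability conditions for a vector field
`X = (X_Q, X_P) : ℝ^d × ℝ^d → ℝ^d × ℝ^d`. -/
def HamIntegrability (d : ℕ)
    (XQ XP : ((Fin d → ℝ) × (Fin d → ℝ)) → (Fin d → ℝ)) : Prop :=
  ∀ z : (Fin d → ℝ) × (Fin d → ℝ), ∀ i k : Fin d,
    pdq d (fun w => XQ w i) k z + pdp d (fun w => XP w k) i z = 0 ∧
    pdp d (fun w => XQ w i) k z = pdp d (fun w => XQ w k) i z ∧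
    pdq d (fun w => XP w i) k z = pdq d (fun w => XP w k) i z

/-- The linearized (Fréchet derivative) operator
`D(u,v)(t) = (u̇ − A u − B v, v̇ − C u − E v)` along the curve `(q,p)`, where
`A = ∂X_Q/∂q`, `B = ∂X_Q/∂p`, `C = ∂X_P/∂q`, `E = ∂X_P/∂p` at `(q(t),p(t))`. -/
def Dop (d : ℕ) (XQ XP : ((Fin d → ℝ) × (Fin d → ℝ)) → (Fin d → ℝ))
    (q p u v : ℝ → Fin d → ℝ) (t : ℝ) : (Fin d → ℝ) × (Fin d → ℝ) :=
  (fun i => deriv u t i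
      - (∑ k, pdq d (fun w => XQ w i) k (q t, p t) * u t k)
      - (∑ k, pdp d (fun w => XQ w i) k (q t, p t) * v t k),
   fun i => deriv v t i
      - (∑ k, pdq d (fun w => XP w i) k (q t, p t) * u t k)
      - (∑ k, pdp d (fun w => XP w i) k (q t, p t) * v t k))

/-!
Along the curve, the integrability conditions say exactly that the coefficient matrices satisfy
`A = -Eᵀ`, `B = Bᵀ`, `C = Cᵀ`. Hence all zeroth-order terms cancel pointwise in
`ω(D(u,v), (f,g)) - ω(D(f,g), (u,v))`, leaving `(u·g)' - (v·f)'`, whose integral vanishes because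
`u` and `v` vanish at both end points.
-/

/-- `ω(x, y) = ⟨x, J y⟩` with `J = [[0, I], [-I, 0]]`. -/
def symplecticPairing {ι : Type*} [Fintype ι] (x y : (ι → ℝ) × (ι → ℝ)) : ℝ :=
  ∑ i, x.1 i * y.2 i - ∑ i, x.2 i * y.1 i

lemma Continuous.symplecticPairing {α ι : Type*} [TopologicalSpace α] [Fintype ι]
    {x y : α → (ι → ℝ) × (ι → ℝ)} (hx : Continuous x) (hy : Continuous y) :
    Continuous fun s => symplecticPairing (x s) (y s) := by
  unfold _root_.symplecticPairing
  fun_prop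

section Algebra

variable {ι : Type*} [Fintype ι]

lemma sum_sum_mul_mul_comm_of_transpose (A A' : ι → ι → ℝ) (h : ∀ i k, A k i = A' i k)
    (x y : ι → ℝ) :
    ∑ i, (∑ k, A i k * x k) * y i = ∑ i, (∑ k, A' i k * y k) * x i := by
  simp only [Finset.sum_mul]
  rw [Finset.sum_comm]
  exact Finset.sum_congr rfl fun k _ => Finset.sum_congr rfl fun i _ => by rw [h]; ring

lemma symplecticPairing_sub_symplecticPairing (A B C E : ι → ι → ℝ)
    (hAE : ∀ i k, A i k + E k i = 0) (hB : ∀ i k, B i k = B k i) (hC : ∀ i k, C i k = C k i)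
    (u v f g u' v' f' g' : ι → ℝ) :
    symplecticPairing
        (fun i => u' i - ∑ k, A i k * u k - ∑ k, B i k * v k,
         fun i => v' i - ∑ k, C i k * u k - ∑ k, E i k * v k) (f, g)
      - symplecticPairing
        (fun i => f' i - ∑ k, A i k * f k - ∑ k, B i k * g k,
         fun i => g' i - ∑ k, C i k * f k - ∑ k, E i k * g k) (u, v)
      = ∑ i, (u' i * g i + g' i * u i) - ∑ i, (v' i * f i + f' i * v i) := by
  have hA : ∀ i k, A k i = -E i k := fun i k => by linarith [hAE k i]
  have hAug := sum_sum_mul_mul_comm_of_transpose A _ hA u g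
  have hAfv := sum_sum_mul_mul_comm_of_transpose A _ hA f v
  have hBvg := sum_sum_mul_mul_comm_of_transpose B B (fun i k => hB k i) v g
  have hCuf := sum_sum_mul_mul_comm_of_transpose C C (fun i k => hC k i) u f
  simp only [neg_mul, Finset.sum_neg_distrib] at hAug hAfv
  simp only [symplecticPairing, sub_mul, Finset.sum_sub_distrib, Finset.sum_add_distrib]
  linarith

end Algebra

section Integration

variable {ι : Type*} [Fintype ι]

lemma hasDerivAt_sum_mul {u g : ℝ → ι → ℝ} {t : ℝ} (hu : DifferentiableAt ℝ u t)
    (hg : DifferentiableAt ℝ g t) :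
    HasDerivAt (fun t => ∑ i, u t i * g t i)
      (∑ i, (deriv u t i * g t i + deriv g t i * u t i)) t := by
  refine HasDerivAt.fun_sum fun i _ => ?_
  refine ((hasDerivAt_pi.mp hu.hasDerivAt i).fun_mul
    (hasDerivAt_pi.mp hg.hasDerivAt i)).congr_deriv ?_
  ring

lemma continuous_sum_deriv_mul_add {u g : ℝ → ι → ℝ} (hu : ContDiff ℝ 1 u)
    (hg : ContDiff ℝ 1 g) :
    Continuous fun t => ∑ i, (deriv u t i * g t i + deriv g t i * u t i) := by
  have hu' := hu.continuous_deriv le_rfl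
  have hg' := hg.continuous_deriv le_rfl
  have := hu.continuous
  have := hg.continuous
  fun_prop

lemma integral_sum_deriv_mul_add_eq_zero {u g : ℝ → ι → ℝ} {a b : ℝ} (hu : ContDiff ℝ 1 u)
    (hg : ContDiff ℝ 1 g) (hua : u a = 0) (hub : u b = 0) :
    ∫ t in a..b, ∑ i, (deriv u t i * g t i + deriv g t i * u t i) = 0 := by
  rw [intervalIntegral.integral_eq_sub_of_hasDerivAt
    (fun t _ => hasDerivAt_sum_mul (hu.differentiable one_ne_zero t)
      (hg.differentiable one_ne_zero t))
    ((continuous_sum_deriv_mul_add hu hg).intervalIntegrable a b)]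
  simp [hua, hub]

end Integration

lemma continuous_fderiv_apply_comp {E F : Type*} [NormedAddCommGroup E] [NormedSpace ℝ E]
    [NormedAddCommGroup F] [NormedSpace ℝ F] {φ : E → F} (hφ : ContDiff ℝ 1 φ) {γ : ℝ → E}
    (hγ : Continuous γ) (e : E) : Continuous fun t => fderiv ℝ φ (γ t) e :=
  ((hφ.continuous_fderiv one_ne_zero).comp hγ).clm_apply continuous_const

section LinearizedOperator

variable {d : ℕ} {XQ XP : ((Fin d → ℝ) × (Fin d → ℝ)) → (Fin d → ℝ)} {q p : ℝ → Fin d → ℝ}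

lemma continuous_Dop (hXQ : ContDiff ℝ 1 XQ) (hXP : ContDiff ℝ 1 XP) (hq : Continuous q)
    (hp : Continuous p) {u v : ℝ → Fin d → ℝ} (hu : ContDiff ℝ 1 u) (hv : ContDiff ℝ 1 v) :
    Continuous (Dop d XQ XP q p u v) := by
  have hqp : Continuous fun t => (q t, p t) := hq.prodMk hp
  have hQ i e := continuous_fderiv_apply_comp (contDiff_pi.mp hXQ i) hqp e
  have hP i e := continuous_fderiv_apply_comp (contDiff_pi.mp hXP i) hqp e
  have hu' := hu.continuous_deriv le_rfl
  have hv' := hv.continuous_deriv le_rfl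
  have := hu.continuous
  have := hv.continuous
  unfold Dop pdq pdp
  fun_prop

lemma continuous_symplecticPairing_Dop (hXQ : ContDiff ℝ 1 XQ) (hXP : ContDiff ℝ 1 XP)
    (hq : Continuous q) (hp : Continuous p) {u v f g : ℝ → Fin d → ℝ} (hu : ContDiff ℝ 1 u)
    (hv : ContDiff ℝ 1 v) (hf : ContDiff ℝ 1 f) (hg : ContDiff ℝ 1 g) :
    Continuous fun t => symplecticPairing (Dop d XQ XP q p u v t) (f t, g t) :=
  (continuous_Dop hXQ hXP hq hp hu hv).symplecticPairing (hf.continuous.prodMk hg.continuous)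

lemma Dop_symplecticPairing_sub (hint : HamIntegrability d XQ XP) (u v f g : ℝ → Fin d → ℝ)
    (t : ℝ) :
    symplecticPairing (Dop d XQ XP q p u v t) (f t, g t)
      - symplecticPairing (Dop d XQ XP q p f g t) (u t, v t)
      = ∑ i, (deriv u t i * g t i + deriv g t i * u t i)
        - ∑ i, (deriv v t i * f t i + deriv f t i * v t i) :=
  symplecticPairing_sub_symplecticPairing _ _ _ _
    (fun i k => (hint (q t, p t) i k).1) (fun i k => (hint (q t, p t) i k).2.1)
    (fun i k => (hint (q t, p t) i k).2.2) ..

end LinearizedOperator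

theorem stmt12_general (d : ℕ) (a b : ℝ)
    (XQ XP : ((Fin d → ℝ) × (Fin d → ℝ)) → (Fin d → ℝ))
    (hXQ : ContDiff ℝ 1 XQ) (hXP : ContDiff ℝ 1 XP)
    (hint : HamIntegrability d XQ XP)
    (q p : ℝ → Fin d → ℝ) (hqc : Continuous q) (hpc : Continuous p) :
    ∀ u v f g : ℝ → Fin d → ℝ,
      ContDiff ℝ 1 u → ContDiff ℝ 1 v → ContDiff ℝ 1 f → ContDiff ℝ 1 g →
      u a = 0 → u b = 0 → v a = 0 → v b = 0 →
      f a = 0 → f b = 0 → g a = 0 → g b = 0 →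
      (∫ t in a..b,
        ((∑ i, (Dop d XQ XP q p u v t).1 i * g t i) -
          ∑ i, (Dop d XQ XP q p u v t).2 i * f t i)) =
      (∫ t in a..b,
        ((∑ i, (Dop d XQ XP q p f g t).1 i * v t i) -
          ∑ i, (Dop d XQ XP q p f g t).2 i * u t i)) := by
  intro u v f g hu hv hf hg hua hub hva hvb _ _ _ _
  change ∫ t in a..b, symplecticPairing (Dop d XQ XP q p u v t) (f t, g t)
    = ∫ t in a..b, symplecticPairing (Dop d XQ XP q p f g t) (u t, v t)
  have hL := continuous_symplecticPairing_Dop hXQ hXP hqc hpc hu hv hf hg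
  have hR := continuous_symplecticPairing_Dop hXQ hXP hqc hpc hf hg hu hv
  rw [← sub_eq_zero, ← intervalIntegral.integral_sub (hL.intervalIntegrable a b)
    (hR.intervalIntegrable a b)]
  simp only [Dop_symplecticPairing_sub hint]
  rw [intervalIntegral.integral_sub ((continuous_sum_deriv_mul_add hu hg).intervalIntegrable a b)
    ((continuous_sum_deriv_mul_add hv hf).intervalIntegrable a b),
    integral_sum_deriv_mul_add_eq_zero hu hg hua hub,
    integral_sum_deriv_mul_add_eq_zero hv hf hva hvb, sub_zero]

/-- if the C¹ vector field `X = (X_Q, X_P)` satisfies the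
Hamiltonian integrability conditions, then the linearized operator `D` along any
continuous curve `(q,p)` is self-adjoint with respect to the `L²` symplectic
scalar product (⟨(x₁,x₂), J·(y₁,y₂)⟩ = ⟨x₁,y₂⟩ − ⟨x₂,y₁⟩). -/
theorem stmt12 (d : ℕ) (hd : 1 ≤ d) (a b : ℝ) (hab : a < b)
    (XQ XP : ((Fin d → ℝ) × (Fin d → ℝ)) → (Fin d → ℝ))
    (hXQ : ContDiff ℝ 1 XQ) (hXP : ContDiff ℝ 1 XP)
    (hint : HamIntegrability d XQ XP)
    (q p : ℝ → Fin d → ℝ) (hqc : Continuous q) (hpc : Continuous p) :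
    ∀ u v f g : ℝ → Fin d → ℝ,
      ContDiff ℝ 1 u → ContDiff ℝ 1 v → ContDiff ℝ 1 f → ContDiff ℝ 1 g →
      u a = 0 → u b = 0 → v a = 0 → v b = 0 →
      f a = 0 → f b = 0 → g a = 0 → g b = 0 →
      (∫ t in a..b,
        ((∑ i, (Dop d XQ XP q p u v t).1 i * g t i) -
          ∑ i, (Dop d XQ XP q p u v t).2 i * f t i)) =
      (∫ t in a..b,
        ((∑ i, (Dop d XQ XP q p f g t).1 i * v t i) -
          ∑ i, (Dop d XQ XP q p f g t).2 i * u t i)) :=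
  stmt12_general d a b XQ XP hXQ hXP hint q p hqc hpc
end
end
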